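/- A ⋈^θ I is commutative if and only if A is commutative and the subalgebra θ(A) + I of B is commutative. -/
import Mathlib


noncomputable def amul {A B : Type*} [NonUnitalNormedRing A] [NormedSpace ℂ A]
    [NonUnitalNormedRing B] [NormedSpace ℂ B]
    (θ : A →L[ℂ] B) {I : Submodule ℂ B}
    (hIl : ∀ b i : B, i ∈ I → b * i ∈ I) (hIr : ∀ b i : B, i ∈ I → i * b ∈ I)
    (x y : A × I) : A × I :=
  (x.1 * y.1,
    ⟨θ x.1 * (y.2 : B) + (x.2 : B) * θ y.1 + (x.2 : B) * (y.2 : B),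
      I.add_mem (I.add_mem (hIl _ _ y.2.2) (hIr _ _ x.2.2)) (hIr _ _ x.2.2)⟩)

/-- `A ⋈^θ I` is commutative if and only if `A` and the subalgebra `θ(A) + I` of `B`
are commutative. -/
theorem amalgamation_comm_iff {A B : Type*} [NonUnitalNormedRing A] [NormedSpace ℂ A]
    [IsScalarTower ℂ A A] [SMulCommClass ℂ A A] [CompleteSpace A]
    [NonUnitalNormedRing B] [NormedSpace ℂ B]
    [IsScalarTower ℂ B B] [SMulCommClass ℂ B B] [CompleteSpace B]
    (θ : A →L[ℂ] B) (hθ : ∀ x y : A, θ (x * y) = θ x * θ y)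
    (I : Submodule ℂ B) (hIc : IsClosed (I : Set B))
    (hIl : ∀ b i : B, i ∈ I → b * i ∈ I) (hIr : ∀ b i : B, i ∈ I → i * b ∈ I) :
    (∀ x y : A × I, amul θ hIl hIr x y = amul θ hIl hIr y x) ↔
      ((∀ a a' : A, a * a' = a' * a) ∧
       (∀ u ∈ {b : B | ∃ a : A, ∃ i ∈ I, b = θ a + i},
        ∀ v ∈ {b : B | ∃ a : A, ∃ i ∈ I, b = θ a + i}, u * v = v * u)) := by
  constructor
  · intro h
    have key : ∀ (a a' : A) (i : B) (hi : i ∈ I) (j : B) (hj : j ∈ I),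
        a * a' = a' * a ∧
        θ a * j + i * θ a' + i * j = θ a' * i + j * θ a + j * i := by
      intro a a' i hi j hj
      have := h (a, ⟨i, hi⟩) (a', ⟨j, hj⟩)
      simp only [amul, Prod.mk.injEq, Subtype.mk.injEq] at this
      exact this
    constructor
    · intro a a'
      exact (key a a' 0 I.zero_mem 0 I.zero_mem).1
    · rintro u ⟨a, i, hi, rfl⟩ v ⟨a', j, hj, rfl⟩
      have h1 : θ a * j = j * θ a := by
        have := (key a 0 0 I.zero_mem j hj).2
        simpa using this
      have h2 : θ a' * i = i * θ a' := by
        have := (key 0 a' i hi 0 I.zero_mem).2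
        simpa using this.symm
      have h3 : i * j = j * i := by
        have := (key 0 0 i hi j hj).2
        simpa using this
      have h4 : θ a * θ a' = θ a' * θ a := by
        rw [← hθ, ← hθ, (key a a' 0 I.zero_mem 0 I.zero_mem).1]
      simp only [mul_add, add_mul]
      rw [h1, h2, h3, h4]
      abel
  · rintro ⟨hA, hS⟩ x y
    have mem : ∀ i : B, i ∈ I → i ∈ {b : B | ∃ a : A, ∃ i ∈ I, b = θ a + i} := by
      intro i hi
      exact ⟨0, i, hi, by simp⟩
    have memθ : ∀ a : A, θ a ∈ {b : B | ∃ a : A, ∃ i ∈ I, b = θ a + i} := by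
      intro a
      exact ⟨a, 0, I.zero_mem, by simp⟩
    obtain ⟨a, i⟩ := x
    obtain ⟨a', j⟩ := y
    simp only [amul, Prod.mk.injEq, Subtype.mk.injEq]
    refine ⟨hA a a', ?_⟩
    have h1 : θ a * (j : B) = (j : B) * θ a := hS _ (memθ a) _ (mem _ j.2)
    have h2 : θ a' * (i : B) = (i : B) * θ a' := hS _ (memθ a') _ (mem _ i.2)
    have h3 : (i : B) * (j : B) = (j : B) * (i : B) := hS _ (mem _ i.2) _ (mem _ j.2)
    rw [h1, ← h2, h3]
    abel
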